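/- Correctness of the two-subsystem contracts for finite-horizon safety specifications with initial sets (Theorem 1 instantiated for safety): Let f1 : ℝ^{n1} → ℝ^{n1}, f2 : ℝ^{n2} → ℝ^{n2}, linear maps C12 : ℝ^{n2} → ℝ^{n1}, C21 : ℝ^{n1} → ℝ^{n2}, safe sets Γ1 ⊆ ℝ^{n1}, Γ2 ⊆ ℝ^{n2}, initial sets B1 ⊆ ℝ^{n1}, B2 ⊆ ℝ^{n2}, horizon N ∈ ℕ, and radii ε1, ε2 ≥ 0. Assume: (H1) for every x̄1 ∈ B1, every trajectory x1 ∈ ξ1(x̄1, ε1) satisfies x1(k) ∈ Γ1 and ‖C21 x1(k)‖∞ ≤ ε2 for all k ∈ {0,…,N}; (H2) the symmetric condition for subsystem 2 with Γ2 and ‖C12 x2(k)‖∞ ≤ ε1. Then for all x̄1 ∈ B1 and x̄2 ∈ B2, the closed-loop trajectories defined by x1(0) = x̄1, x2(0) = x̄2, x1(k+1) = f1(x1(k)) + C12 x2(k), x2(k+1) = f2(x2(k)) + C21 x1(k) satisfy x1(k) ∈ Γ1 and x2(k) ∈ Γ2 for all k ∈ {0,…,N}, i.e., the interconnected system satisfies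 the finite-horizon safety specification □^N Γ1 ∧ □^N Γ2. -/
import Mathlib


open scoped NNReal ENNReal

/-- The state trajectory of the discrete-time system `x(k+1) = f(x(k)) + w(k)`
starting from `x0` under the disturbance sequence `w`. -/
def traj {n : ℕ} (f : (Fin n → ℝ) → (Fin n → ℝ)) (x0 : Fin n → ℝ)
    (w : ℕ → Fin n → ℝ) : ℕ → Fin n → ℝ
  | 0 => x0
  | k + 1 => f (traj f x0 w k) + w k

/-- `xi f N x0 ε` is the set of all state trajectories over the horizon `{0,…,N}`
starting from `x0` under disturbance sequences bounded by `ε` in the sup-norm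
(the norm on `Fin n → ℝ` is the sup-norm). -/
def xi {n : ℕ} (f : (Fin n → ℝ) → (Fin n → ℝ)) (N : ℕ) (x0 : Fin n → ℝ)
    (ε : ℝ≥0) : Set (Fin (N + 1) → Fin n → ℝ) :=
  { x | ∃ w : ℕ → Fin n → ℝ, (∀ k < N, ‖w k‖ ≤ (ε : ℝ)) ∧
      ∀ k : Fin (N + 1), x k = traj f x0 w (k : ℕ) }

private lemma traj_congr {n : ℕ} (f : (Fin n → ℝ) → (Fin n → ℝ)) (x0 : Fin n → ℝ)
    (w w' : ℕ → Fin n → ℝ) (m : ℕ) (h : ∀ j < m, w j = w' j) :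
    ∀ k ≤ m, traj f x0 w k = traj f x0 w' k := by
  intro k hk
  induction k with
  | zero => rfl
  | succ k ih =>
    simp only [traj, ih (Nat.le_of_succ_le hk), h k (Nat.lt_of_succ_le hk)]

private lemma traj_closed {n : ℕ} (f : (Fin n → ℝ) → (Fin n → ℝ))
    (x : ℕ → Fin n → ℝ) (u : ℕ → Fin n → ℝ)
    (hstep : ∀ k, x (k + 1) = f (x k) + u k) :
    ∀ k, x k = traj f (x 0) u k := by
  intro k
  induction k with
  | zero => rfl
  | succ k ih => simp only [traj, hstep k, ih]

/-- Correctness of the two-subsystem contracts for finite-horizon safety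
specifications with initial sets (Theorem 1 instantiated for safety): under the
resilience-based assume-guarantee hypotheses, the interconnected closed loop
satisfies `□^N Γ1 ∧ □^N Γ2` from every pair of initial states in `B1 × B2`. -/
theorem two_subsystem_safety_correct {n1 n2 N : ℕ}
    (f1 : (Fin n1 → ℝ) → (Fin n1 → ℝ)) (f2 : (Fin n2 → ℝ) → (Fin n2 → ℝ))
    (C12 : (Fin n2 → ℝ) →ₗ[ℝ] (Fin n1 → ℝ)) (C21 : (Fin n1 → ℝ) →ₗ[ℝ] (Fin n2 → ℝ))
    (Γ1 B1 : Set (Fin n1 → ℝ)) (Γ2 B2 : Set (Fin n2 → ℝ)) (ε1 ε2 : ℝ≥0)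
    (H1 : ∀ xb1 ∈ B1, ∀ x1 ∈ xi f1 N xb1 ε1,
      (∀ k : Fin (N + 1), x1 k ∈ Γ1) ∧
      ∀ k : Fin (N + 1), ‖C21 (x1 k)‖ ≤ (ε2 : ℝ))
    (H2 : ∀ xb2 ∈ B2, ∀ x2 ∈ xi f2 N xb2 ε2,
      (∀ k : Fin (N + 1), x2 k ∈ Γ2) ∧
      ∀ k : Fin (N + 1), ‖C12 (x2 k)‖ ≤ (ε1 : ℝ)) :
    ∀ xb1 ∈ B1, ∀ xb2 ∈ B2,
      -- the closed-loop trajectories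
      ∀ x1 : ℕ → Fin n1 → ℝ, ∀ x2 : ℕ → Fin n2 → ℝ,
        x1 0 = xb1 → x2 0 = xb2 →
        (∀ k, x1 (k + 1) = f1 (x1 k) + C12 (x2 k)) →
        (∀ k, x2 (k + 1) = f2 (x2 k) + C21 (x1 k)) →
        ∀ k ≤ N, x1 k ∈ Γ1 ∧ x2 k ∈ Γ2 := by
  intro xb1 hb1 xb2 hb2 x1 x2 h10 h20 hs1 hs2
  -- the actual coupling inputs
  set u1 : ℕ → Fin n1 → ℝ := fun k => C12 (x2 k) with hu1
  set u2 : ℕ → Fin n2 → ℝ := fun k => C21 (x1 k) with hu2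
  have htraj1 : ∀ k, x1 k = traj f1 xb1 u1 k := by
    rw [← h10]; exact traj_closed f1 x1 u1 hs1
  have htraj2 : ∀ k, x2 k = traj f2 xb2 u2 k := by
    rw [← h20]; exact traj_closed f2 x2 u2 hs2
  -- bounds on the coupling inputs, by strong induction
  have key : ∀ m ≤ N, ‖C12 (x2 m)‖ ≤ (ε1 : ℝ) ∧ ‖C21 (x1 m)‖ ≤ (ε2 : ℝ) := by
    intro m
    induction m using Nat.strong_induction_on with
    | _ m ih =>
      intro hm
      -- truncated disturbances
      set w1 : ℕ → Fin n1 → ℝ := fun k => if k < m then u1 k else 0 with hw1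
      set w2 : ℕ → Fin n2 → ℝ := fun k => if k < m then u2 k else 0 with hw2
      have hbw1 : ∀ k < N, ‖w1 k‖ ≤ (ε1 : ℝ) := by
        intro k _
        by_cases hkm : k < m
        · simpa [hw1, hkm] using (ih k hkm (le_of_lt (lt_of_lt_of_le hkm hm))).1
        · simp [hw1, hkm]
      have hbw2 : ∀ k < N, ‖w2 k‖ ≤ (ε2 : ℝ) := by
        intro k _
        by_cases hkm : k < m
        · simpa [hw2, hkm] using (ih k hkm (le_of_lt (lt_of_lt_of_le hkm hm))).2
        · simp [hw2, hkm]
      have hag1 : ∀ k ≤ m, traj f1 xb1 u1 k = traj f1 xb1 w1 k :=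
        traj_congr f1 xb1 u1 w1 m (fun j hj => by simp [hw1, hj])
      have hag2 : ∀ k ≤ m, traj f2 xb2 u2 k = traj f2 xb2 w2 k :=
        traj_congr f2 xb2 u2 w2 m (fun j hj => by simp [hw2, hj])
      have hx1 : (fun k : Fin (N + 1) => traj f1 xb1 w1 (k : ℕ)) ∈ xi f1 N xb1 ε1 :=
        ⟨w1, hbw1, fun k => rfl⟩
      have hx2 : (fun k : Fin (N + 1) => traj f2 xb2 w2 (k : ℕ)) ∈ xi f2 N xb2 ε2 :=
        ⟨w2, hbw2, fun k => rfl⟩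
      have h1 := (H1 xb1 hb1 _ hx1).2 ⟨m, Nat.lt_succ_of_le hm⟩
      have h2 := (H2 xb2 hb2 _ hx2).2 ⟨m, Nat.lt_succ_of_le hm⟩
      constructor
      · have : x2 m = traj f2 xb2 w2 m := (htraj2 m).trans (hag2 m le_rfl)
        simpa [this] using h2
      · have : x1 m = traj f1 xb1 w1 m := (htraj1 m).trans (hag1 m le_rfl)
        simpa [this] using h1
  -- now use the full coupling inputs as admissible disturbances
  have hbu1 : ∀ k < N, ‖u1 k‖ ≤ (ε1 : ℝ) := fun k hk => (key k (le_of_lt hk)).1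
  have hbu2 : ∀ k < N, ‖u2 k‖ ≤ (ε2 : ℝ) := fun k hk => (key k (le_of_lt hk)).2
  have hx1 : (fun k : Fin (N + 1) => traj f1 xb1 u1 (k : ℕ)) ∈ xi f1 N xb1 ε1 :=
    ⟨u1, hbu1, fun k => rfl⟩
  have hx2 : (fun k : Fin (N + 1) => traj f2 xb2 u2 (k : ℕ)) ∈ xi f2 N xb2 ε2 :=
    ⟨u2, hbu2, fun k => rfl⟩
  intro k hk
  have g1 := (H1 xb1 hb1 _ hx1).1 ⟨k, Nat.lt_succ_of_le hk⟩
  have g2 := (H2 xb2 hb2 _ hx2).1 ⟨k, Nat.lt_succ_of_le hk⟩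
  exact ⟨by simpa [← htraj1 k] using g1, by simpa [← htraj2 k] using g2⟩
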